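/- arXiv:2503.02704 — 3 statements merged into one kernel-verified Lean document; each statement's English description precedes it below -/
import Mathlib

section
/- Let A be a nonzero symmetric n×n complex matrix (n ≥ 4) with A_{i,i} = 0 and A_{i,i+1} = 0 for all i (indices modulo n, so also A_{1,n} = 0), and suppose every 3×3 minor of A of the form det(A({i, i+1, ..., j}, {j, j+1, ..., n, 1, ..., i})) arising from rank-2 conditions on all 'cyclically contiguous' submatrices vanishes in the sense that rank A({1,...,j},{j,...,n,1}) ≤ 2 for every j. Then there exist indices i, k (taken modulo n) such that A_{i,k} ≠ 0 and A_{i,k+1} = A_{i+1,k} = A_{i+1,k+1} = 0. -/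
/-!
Let `D` be the largest cyclic offset `y - x ∈ [0, n)` of a nonzero entry `A x y`, attained at
`(i, i + D)`; the zero diagonal and band, with symmetry, give `2 ≤ D ≤ n - 2`. In the arc
submatrix with rows `i, …, i + D` and columns `i + D, …, i + n`, the corners `A i (i + D)` and
`A (i + D) i` are nonzero while, by maximality of `D`, the rest of the first and last rows
vanishes. A nonzero entry in any other column would complete a nonsingular `3 × 3` minor, so
rank `≤ 2` kills all of them. With `k = i + D` and `i + s` the lowest row above `k - 1` such that
`A (i + s) k ≠ 0`, the three neighbours of `(i + s, k)` are then zero.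
-/

open Matrix

theorem Matrix.apply_eq_zero_of_rank_le_two {K m n : Type*} [Field K] [Fintype n]
    {M : Matrix m n K} (hM : M.rank ≤ 2) {r₀ r₁ r₂ : m} {c₀ c₁ c₂ : n}
    (h₀₀ : M r₀ c₀ ≠ 0) (h₂₂ : M r₂ c₂ ≠ 0) (h₀₁ : M r₀ c₁ = 0) (h₀₂ : M r₀ c₂ = 0)
    (h₂₀ : M r₂ c₀ = 0) (h₂₁ : M r₂ c₁ = 0) : M r₁ c₁ = 0 := by
  by_contra h₁₁
  have hdet : (M.submatrix ![r₀, r₁, r₂] ![c₀, c₁, c₂]).det = M r₀ c₀ * M r₁ c₁ * M r₂ c₂ := by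
    simp only [det_fin_three, submatrix_apply, cons_val, h₀₁, h₀₂, h₂₀, h₂₁]
    ring
  have hunit : IsUnit (M.submatrix ![r₀, r₁, r₂] ![c₀, c₁, c₂]) := by
    rw [isUnit_iff_isUnit_det, hdet, isUnit_iff_ne_zero]
    exact mul_ne_zero (mul_ne_zero h₀₀ h₁₁) h₂₂
  have := rank_submatrix_le M ![r₀, r₁, r₂] ![c₀, c₁, c₂]
  rw [rank_of_isUnit _ hunit, Fintype.card_fin] at this
  omega

namespace ZMod

theorem natCast_add_natCast_sub_self {n a : ℕ} (h : a ≤ n) :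
    (a : ZMod n) + ((n - a : ℕ) : ZMod n) = 0 := by
  rw [← Nat.cast_add, Nat.add_sub_cancel' h, natCast_self]

end ZMod

section Zero

variable {K : Type*} [Zero K] {n : ℕ} {A : Matrix (ZMod n) (ZMod n) K}

def arcSubmatrix (A : Matrix (ZMod n) (ZMod n) K) (i : ZMod n) (a : ℕ) :
    Matrix (Fin (a + 1)) (Fin (n - a + 1)) K :=
  of fun s t => A (i + ((s : ℕ) : ZMod n)) (i + (a : ZMod n) + ((t : ℕ) : ZMod n))

/-- `D` is the largest offset `y - x` (read in `[0, n)`) of a nonzero entry `A x y`, attained in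
row `i`. -/
structure IsMaxOffset (A : Matrix (ZMod n) (ZMod n) K) (i : ZMod n) (D : ℕ) : Prop where
  lt : D < n
  apply_ne_zero : A i (i + D) ≠ 0
  apply_eq_zero_of_lt : ∀ x (d : ℕ), D < d → d < n → A x (x + d) = 0

theorem exists_isMaxOffset [NeZero n] (hA : A ≠ 0) : ∃ i D, IsMaxOffset A i D := by
  classical
  obtain ⟨x, y, hxy⟩ : ∃ x y, A x y ≠ 0 := by simpa [← Matrix.ext_iff] using hA
  let P : ℕ → Prop := fun d => ∃ x, A x (x + d) ≠ 0
  have hP : P (y - x).val := ⟨x, by rwa [ZMod.natCast_zmod_val, add_sub_cancel]⟩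
  obtain ⟨i, hi⟩ := Nat.findGreatest_spec (Nat.le_pred_of_lt (ZMod.val_lt (y - x))) hP
  refine ⟨i, Nat.findGreatest P (n - 1), ⟨?_, hi, fun z d hd hdn => ?_⟩⟩
  · exact lt_of_le_of_lt (Nat.findGreatest_le _) (Nat.pred_lt (NeZero.ne n))
  · by_contra hz
    exact Nat.findGreatest_is_greatest hd (Nat.le_pred_of_lt hdn) ⟨z, hz⟩

namespace IsMaxOffset

variable {i : ZMod n} {D : ℕ}

theorem one_lt (h : IsMaxOffset A i D) (hdiag : ∀ i, A i i = 0)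
    (hadj : ∀ i, A i (i + 1) = 0) : 1 < D := by
  have hx := h.apply_ne_zero
  by_contra! hD
  interval_cases D
  · simp [hdiag] at hx
  · simp [hadj] at hx

theorem add_one_lt (h : IsMaxOffset A i D) (hsymm : A.IsSymm) (hadj : ∀ i, A i (i + 1) = 0) :
    D + 1 < n := by
  by_contra! hD
  have hD' : (D : ZMod n) = -1 := by
    rw [eq_neg_iff_add_eq_zero, ← Nat.cast_add_one, show D + 1 = n by have := h.lt; omega,
      ZMod.natCast_self]
  apply h.apply_ne_zero
  rw [hD', ← sub_eq_add_neg, hsymm.apply]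
  simpa using hadj (i - 1)

end IsMaxOffset

end Zero

section Field

variable {K : Type*} [Field K] {n : ℕ} {A : Matrix (ZMod n) (ZMod n) K}

namespace IsMaxOffset

variable {i : ZMod n} {D : ℕ}

theorem apply_eq_zero (h : IsMaxOffset A i D) (hsymm : A.IsSymm) (hdiag : ∀ i, A i i = 0)
    (hrank : (arcSubmatrix A i D).rank ≤ 2) {s t : ℕ} (hs : s ≤ D) (ht₀ : 0 < t)
    (ht : t < n - D) : A (i + s) (i + D + t) = 0 := by
  have hD := h.lt
  have hwrap : i + D + ((n - D : ℕ) : ZMod n) = i := by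
    rw [add_assoc, ZMod.natCast_add_natCast_sub_self hD.le, add_zero]
  have hwrap' : i + D + t + ((n - t : ℕ) : ZMod n) = i + D := by
    rw [add_assoc _ (t : ZMod n), ZMod.natCast_add_natCast_sub_self (by omega), add_zero]
  have key := Matrix.apply_eq_zero_of_rank_le_two hrank (r₀ := 0) (r₁ := ⟨s, by omega⟩)
    (r₂ := ⟨D, by omega⟩) (c₀ := 0) (c₁ := ⟨t, by omega⟩) (c₂ := ⟨n - D, by omega⟩)
  simp only [arcSubmatrix, of_apply, Fin.val_zero, Nat.cast_zero, add_zero, hwrap] at key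
  refine key h.apply_ne_zero ?_ ?_ (hdiag i) (hdiag _) ?_
  · rw [hsymm.apply]
    exact h.apply_ne_zero
  · rw [add_assoc, ← Nat.cast_add]
    exact h.apply_eq_zero_of_lt i (D + t) (by omega) (by omega)
  · have := h.apply_eq_zero_of_lt (i + D + t) (n - t) (by omega) (by omega)
    rwa [hwrap', hsymm.apply] at this

theorem exists_corner (h : IsMaxOffset A i D) (hsymm : A.IsSymm) (hdiag : ∀ i, A i i = 0)
    (hadj : ∀ i, A i (i + 1) = 0) (hrank : (arcSubmatrix A i D).rank ≤ 2) :
    ∃ i k : ZMod n, A i k ≠ 0 ∧ A i (k + 1) = 0 ∧ A (i + 1) k = 0 ∧ A (i + 1) (k + 1) = 0 := by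
  classical
  have hD₁ := h.one_lt hdiag hadj
  have hDn := h.add_one_lt hsymm hadj
  have hzero {s : ℕ} (hs : s ≤ D) : A (i + s) (i + D + 1) = 0 := by
    simpa using h.apply_eq_zero hsymm hdiag hrank hs one_pos (by omega)
  let P : ℕ → Prop := fun s => A (i + s) (i + D) ≠ 0
  set s := Nat.findGreatest P (D - 1)
  have hs : P s := Nat.findGreatest_spec (Nat.zero_le _) (by simpa [P] using h.apply_ne_zero)
  have hsD : s < D - 1 := by
    refine lt_of_le_of_ne (Nat.findGreatest_le _) fun hs' => hs ?_
    have hD : i + ((D - 1 : ℕ) : ZMod n) + 1 = i + D := by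
      rw [add_assoc, ← Nat.cast_add_one, Nat.sub_add_cancel (by omega)]
    rw [hs', ← hD]
    exact hadj _
  refine ⟨i + s, i + D, hs, hzero (by omega), ?_, ?_⟩
  · have := Nat.findGreatest_is_greatest (Nat.lt_succ_self s) hsD
    simpa [P, add_assoc] using this
  · simpa [add_assoc] using hzero (s := s + 1) (by omega)

end IsMaxOffset

end Field

theorem stmt4 (n : ℕ) (hn : 4 ≤ n) (A : Matrix (ZMod n) (ZMod n) ℂ)
    (hsymm : A.IsSymm) (hA : A ≠ 0)
    (hdiag : ∀ i, A i i = 0) (hadj : ∀ i, A i (i + 1) = 0)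
    -- every cyclically contiguous submatrix whose rows form the arc from `i` to `i + a`
    -- and whose columns form the complementary arc from `i + a` back to `i` has rank ≤ 2
    (hrank : ∀ (i : ZMod n) (a : ℕ), a ≤ n →
      (Matrix.of fun (s : Fin (a + 1)) (t : Fin (n - a + 1)) =>
        A (i + ((s : ℕ) : ZMod n)) (i + (a : ZMod n) + ((t : ℕ) : ZMod n))).rank ≤ 2) :
    ∃ i k : ZMod n, A i k ≠ 0 ∧ A i (k + 1) = 0 ∧ A (i + 1) k = 0 ∧ A (i + 1) (k + 1) = 0 := by
  have : NeZero n := ⟨by omega⟩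
  obtain ⟨i, D, h⟩ := exists_isMaxOffset hA
  exact h.exists_corner hsymm hdiag hadj (hrank i D h.lt.le)
end

section
/- Let A be an invertible symmetric n×n complex matrix lying in a linear subspace L of symmetric matrices, and suppose the variety L^{-1} = closure{K^{-1} : K ∈ L invertible} is tangent at A^{-1} to an affine subspace S + L^⊥ (i.e., they share a nonzero common tangent vector at A^{-1}). Then, applying the inversion map φ(X) = X^{-1}, which is a local isomorphism near invertible matrices, the image φ(L^{-1}) coincides locally with L near A, so L and φ(S + L^⊥) share a common tangent direction at A; in particular, any line ℓ' ⊂ L through A tangent to φ(S + L^⊥) witnesses a non-transverse intersection of the line with φ(S + L^⊥). -/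
/-! Matrix inversion is differentiable at every invertible matrix, with differential `v ↦ -A v A`
at `A⁻¹`, so it carries tangent vectors at `A⁻¹` to tangent vectors at `A`.
Since inversion is continuous on the open set of units, it maps the part of `closure L⁻¹`
consisting of invertible matrices back into the closed subspace `L`, and it maps `S + L^⊥` into
`φ(S + L^⊥)`. Hence the image of a common nonzero tangent vector of `L⁻¹` and `S + L^⊥` at `A⁻¹`
is a common nonzero tangent vector of `L` and `φ(S + L^⊥)` at `A`. -/

open Matrix Set

attribute [local instance] Matrix.linftyOpNormedAddCommGroup Matrix.linftyOpNormedRing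
  Matrix.linftyOpNormedAlgebra

section NormedAlgebra

variable {𝕜 R : Type*} [NontriviallyNormedField 𝕜] [NormedRing R] [NormedAlgebra 𝕜 R]
  [CompleteSpace R]

theorem neg_mul_mul_mem_tangentConeAt_image_ringInverse {s : Set R} (x : Rˣ) {v : R}
    (hv : v ∈ tangentConeAt 𝕜 s x) :
    -(↑x⁻¹ * v * ↑x⁻¹) ∈
      tangentConeAt 𝕜 (Ring.inverse '' (s ∩ {y | IsUnit y})) ↑x⁻¹ := by
  rw [← tangentConeAt_inter_nhds (Units.isOpen.mem_nhds x.isUnit)] at hv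
  have := (hasFDerivAt_ringInverse (𝕜 := 𝕜) x).hasFDerivWithinAt.mapsTo_tangent_cone hv
  rwa [Ring.inverse_unit] at this

omit [NormedAlgebra 𝕜 R] in
theorem image_ringInverse_closure_image_ringInverse_subset {L : Set R} (hL : IsClosed L) :
    Ring.inverse '' (closure (Ring.inverse '' {K ∈ L | IsUnit K}) ∩ {y | IsUnit y}) ⊆ L := by
  rintro _ ⟨x, ⟨hx, hxu⟩, rfl⟩
  have hinvinv : Ring.inverse '' (Ring.inverse '' {K ∈ L | IsUnit K}) ⊆ L := by
    rintro _ ⟨_, ⟨K, ⟨hKL, hKu⟩, rfl⟩, rfl⟩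
    rwa [Ring.inverse_inverse hKu]
  have hmem := mem_closure_image (NormedRing.inverse_continuousAt hxu.unit) hx
  exact hL.closure_subset (closure_mono hinvinv hmem)

end NormedAlgebra

theorem stmt16_general (n : ℕ) (A : Matrix (Fin n) (Fin n) ℂ)
    (L : Submodule ℂ (Matrix (Fin n) (Fin n) ℂ))
    (hAunit : IsUnit A)
    (S : Matrix (Fin n) (Fin n) ℂ)
    -- the reciprocal variety `L⁻¹` (closure of the set of inverses of invertible elements
    -- of `L`) and the affine space `S + L^⊥` (orthogonality w.r.t. the trace pairing)
    -- share a nonzero common tangent vector at the point `A⁻¹`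
    (htang : ∃ v : Matrix (Fin n) (Fin n) ℂ, v ≠ 0 ∧
      v ∈ tangentConeAt ℂ (closure {B | ∃ K ∈ L, IsUnit K ∧ B = K⁻¹}) A⁻¹ ∧
      v ∈ tangentConeAt ℂ
        {B | ∃ C : Matrix (Fin n) (Fin n) ℂ,
          (∀ K ∈ L, (C * K).trace = 0) ∧ B = S + C} A⁻¹) :
    -- then `L` and `φ(S + L^⊥)`, the image of `S + L^⊥` under matrix inversion,
    -- share a nonzero common tangent direction at `A`
    ∃ v : Matrix (Fin n) (Fin n) ℂ, v ≠ 0 ∧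
      v ∈ tangentConeAt ℂ (L : Set (Matrix (Fin n) (Fin n) ℂ)) A ∧
      v ∈ tangentConeAt ℂ
        {B | ∃ X : Matrix (Fin n) (Fin n) ℂ,
          (∃ C : Matrix (Fin n) (Fin n) ℂ, (∀ K ∈ L, (C * K).trace = 0) ∧ X = S + C) ∧
          IsUnit X ∧ B = X⁻¹} A := by
  obtain ⟨v, hv0, hvL, hvS⟩ := htang
  obtain ⟨u, rfl⟩ := hAunit
  rw [← coe_units_inv] at hvL hvS
  set w := -((u : Matrix (Fin n) (Fin n) ℂ) * v * u)
  have push : ∀ {s : Set (Matrix (Fin n) (Fin n) ℂ)}, v ∈ tangentConeAt ℂ s ↑u⁻¹ →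
      w ∈ tangentConeAt ℂ (Ring.inverse '' (s ∩ {y | IsUnit y})) ↑u := fun hv ↦ by
    have := neg_mul_mul_mem_tangentConeAt_image_ringInverse u⁻¹ hv
    rwa [inv_inv] at this
  have hw0 : w ≠ 0 := by
    simpa only [w, ne_eq, neg_eq_zero, Units.mul_right_eq_zero, Units.mul_left_eq_zero] using hv0
  refine ⟨w, hw0, tangentConeAt_mono ?_ (push hvL), tangentConeAt_mono ?_ (push hvS)⟩
  · have hinv : {B | ∃ K ∈ L, IsUnit K ∧ B = K⁻¹} =
        Ring.inverse '' {K ∈ (L : Set (Matrix (Fin n) (Fin n) ℂ)) | IsUnit K} := by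
      ext B
      simp [nonsing_inv_eq_ringInverse, eq_comm, and_assoc]
    rw [hinv]
    exact image_ringInverse_closure_image_ringInverse_subset L.closed_of_finiteDimensional
  · rintro _ ⟨X, ⟨hX, hXu⟩, rfl⟩
    exact ⟨X, hX, hXu, (nonsing_inv_eq_ringInverse X).symm⟩

theorem stmt16 (n : ℕ) (A : Matrix (Fin n) (Fin n) ℂ)
    (L : Submodule ℂ (Matrix (Fin n) (Fin n) ℂ))
    (hLsymm : ∀ M ∈ L, M.IsSymm)
    (hA : A ∈ L) (hAunit : IsUnit A) (hAsymm : A.IsSymm)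
    (S : Matrix (Fin n) (Fin n) ℂ)
    -- the reciprocal variety `L⁻¹` (closure of the set of inverses of invertible elements
    -- of `L`) and the affine space `S + L^⊥` (orthogonality w.r.t. the trace pairing)
    -- share a nonzero common tangent vector at the point `A⁻¹`
    (htang : ∃ v : Matrix (Fin n) (Fin n) ℂ, v ≠ 0 ∧
      v ∈ tangentConeAt ℂ (closure {B | ∃ K ∈ L, IsUnit K ∧ B = K⁻¹}) A⁻¹ ∧
      v ∈ tangentConeAt ℂ
        {B | ∃ C : Matrix (Fin n) (Fin n) ℂ,
          (∀ K ∈ L, (C * K).trace = 0) ∧ B = S + C} A⁻¹) :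
    -- then `L` and `φ(S + L^⊥)`, the image of `S + L^⊥` under matrix inversion,
    -- share a nonzero common tangent direction at `A`
    ∃ v : Matrix (Fin n) (Fin n) ℂ, v ≠ 0 ∧
      v ∈ tangentConeAt ℂ (L : Set (Matrix (Fin n) (Fin n) ℂ)) A ∧
      v ∈ tangentConeAt ℂ
        {B | ∃ X : Matrix (Fin n) (Fin n) ℂ,
          (∃ C : Matrix (Fin n) (Fin n) ℂ, (∀ K ∈ L, (C * K).trace = 0) ∧ X = S + C) ∧
          IsUnit X ∧ B = X⁻¹} A :=
  stmt16_general n A L hAunit S htang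
end

section
/- For the tridiagonal determinant polynomials P_k with P_0 = P_1 = 1 and P_k(x) = P_{k-1}(x) − x² P_{k-2}(x), the polynomial P_{m-1}(x) + x P_{m-2}(x) divides P_{2m-2}(x) for every m ≥ 2. -/
open Matrix Polynomial

/-- The `k×k` symmetric tridiagonal matrix with `1` on the diagonal and the variable `X` on the
off-diagonals, over `ℂ[X]`. -/
noncomputable def triMatX (k : ℕ) : Matrix (Fin k) (Fin k) (Polynomial ℂ) :=
  Matrix.of fun i j =>
    if (i : ℕ) = (j : ℕ) then 1
    else if (i : ℕ) + 1 = (j : ℕ) ∨ (j : ℕ) + 1 = (i : ℕ) then Polynomial.X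
    else 0

/-- The tridiagonal determinant polynomial `P_k(x)`. -/
noncomputable def Pp (k : ℕ) : Polynomial ℂ := (triMatX k).det

lemma Pp_zero : Pp 0 = 1 := by simp [Pp, Matrix.det_fin_zero]

lemma Pp_one : Pp 1 = 1 := by simp [Pp, Matrix.det_fin_one, triMatX]

lemma triMat_sub (k : ℕ) :
    (triMatX (k+1)).submatrix Fin.succ Fin.succ = triMatX k := by
  ext i j
  simp only [Matrix.submatrix_apply, triMatX, Matrix.of_apply, Fin.val_succ]
  split_ifs with h1 h2 h3 h4 <;> first | rfl | omega

lemma Pp_rec (k : ℕ) : Pp (k+2) = Pp (k+1) - X^2 * Pp k := by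
  have h := Matrix.det_succ_row_zero (triMatX (k+2))
  rw [Fin.sum_univ_succ, Fin.sum_univ_succ] at h
  have hzero : ∀ j : Fin k, (triMatX (k+2)) 0 j.succ.succ = 0 := by
    intro j; simp [triMatX]
  simp only [hzero, mul_zero, zero_mul, Finset.sum_const_zero, add_zero] at h
  have h00 : (triMatX (k+2)) 0 0 = 1 := by simp [triMatX]
  have h01 : (triMatX (k+2)) 0 (Fin.succ 0) = X := by simp [triMatX]
  have hA : ((triMatX (k+2)).submatrix Fin.succ ((0 : Fin (k+2)).succAbove)).det
      = Pp (k+1) := by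
    rw [Fin.succAbove_zero, triMat_sub]; rfl
  -- Now the j = 1 minor
  set B := (triMatX (k+2)).submatrix Fin.succ ((Fin.succ (0 : Fin (k+1))).succAbove) with hB
  have hBval : ∀ i j, B i j
      = triMatX (k+2) i.succ ((Fin.succ (0 : Fin (k+1))).succAbove j) := fun i j => rfl
  have hsA : ∀ j : Fin (k+1), (((Fin.succ (0 : Fin (k+1))).succAbove j : Fin (k+2)) : ℕ)
      = if (j : ℕ) < 1 then (j : ℕ) else (j : ℕ) + 1 := by
    intro j
    rcases lt_or_ge (j.castSucc) (Fin.succ 0) with hlt | hle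
    · rw [Fin.succAbove_of_castSucc_lt _ _ hlt]
      have : (j : ℕ) < 1 := hlt
      simp [this]
    · rw [Fin.succAbove_of_le_castSucc _ _ hle]
      have h' : (1:ℕ) ≤ (j : ℕ) := by simpa using (Fin.le_def).mp hle
      have : ¬ (j : ℕ) < 1 := by omega
      simp [this]
  have hdetB : B.det = X * Pp k := by
    rw [Matrix.det_succ_column_zero, Fin.sum_univ_succ]
    have hB00 : B 0 0 = X := by
      rw [hBval]
      have h0 : (((Fin.succ (0 : Fin (k+1))).succAbove 0 : Fin (k+2)) : ℕ) = 0 := by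
        rw [hsA]; simp
      simp [triMatX, h0]
    have hBrest : ∀ i : Fin k, B i.succ 0 = 0 := by
      intro i
      rw [hBval]
      have h0 : (((Fin.succ (0 : Fin (k+1))).succAbove 0 : Fin (k+2)) : ℕ) = 0 := by
        rw [hsA]; simp
      simp only [triMatX, Matrix.of_apply, h0, Fin.val_succ]
      split_ifs <;> first | rfl | omega | simp_all
    simp only [hBrest, mul_zero, zero_mul, Finset.sum_const_zero, add_zero, hB00]
    have hsub : B.submatrix ((0 : Fin (k+1)).succAbove) Fin.succ = triMatX k := by
      ext i j
      rw [Matrix.submatrix_apply, Fin.succAbove_zero, hBval]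
      have hj : (((Fin.succ (0 : Fin (k+1))).succAbove j.succ : Fin (k+2)) : ℕ) = (j : ℕ) + 2 := by
        rw [hsA]; simp
      simp only [triMatX, Matrix.of_apply, Fin.val_succ, hj]
      split_ifs with h1 h2 h3 h4 <;> first | rfl | omega
    rw [hsub]
    simp [Pp]
  have hPP : Pp (k+2) = (triMatX (k+2)).det := rfl
  rw [hPP, h, hA, h00, h01, hdetB]
  simp [Fin.val_succ]
  ring

lemma Pp_add : ∀ k n, Pp (n+1+k+1) = Pp (n+1) * Pp (k+1) - X^2 * Pp n * Pp k := by
  intro k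
  induction k using Nat.strong_induction_on with
  | _ k ih =>
    match k with
    | 0 =>
      intro n
      have := Pp_rec n
      rw [Pp_one, Pp_zero]
      rw [show n+1+0+1 = n+2 from by omega, this]
      ring
    | 1 =>
      intro n
      have h2 : Pp 2 = 1 - X^2 := by
        have := Pp_rec 0; rw [Pp_one, Pp_zero] at this; simpa using this
      rw [show n+1+1+1 = (n+1)+2 from by omega, Pp_rec (n+1), Pp_rec n, h2, Pp_one]
      ring
    | (k+2) =>
      intro n
      have h1 := ih (k+1) (by omega) n
      have h0 := ih k (by omega) n
      rw [show n+1+(k+2)+1 = (n+k+2)+2 from by omega, Pp_rec (n+k+2),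
        show n+k+2+1 = n+1+(k+1)+1 from by omega, h1,
        show n+k+2 = n+1+k+1 from by omega, h0,
        show k+2+1 = (k+1)+2 from by omega, Pp_rec (k+1), Pp_rec k]
      ring

theorem stmt18 (m : ℕ) (hm : 2 ≤ m) :
    (Pp (m - 1) + Polynomial.X * Pp (m - 2)) ∣ Pp (2 * m - 2) := by
  obtain ⟨p, rfl⟩ : ∃ p, m = p + 2 := ⟨m - 2, by omega⟩
  have h := Pp_add p p
  refine ⟨Pp (p+1) - X * Pp p, ?_⟩
  rw [show 2*(p+2)-2 = p+1+p+1 from by omega, h,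
    show p+2-1 = p+1 from by omega, show p+2-2 = p from by omega]
  ring
end
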